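/- For m ≥ 3 and n = 2^m, the number of balanced codewords in the extended Hamming code RM(m-2, m) equals (1/n)·[C(n, n/2) + (n-1)·C(n/2, n/4)]. -/

import Mathlib

/-- Weight of a Boolean function: number of inputs mapped to 1. -/
def wtF {m : ℕ} (f : (Fin m → ZMod 2) → ZMod 2) : ℕ :=
  (Finset.univ.filter fun x => f x = 1).card

/-- The Reed–Muller code RM(r,m): the span of the monomial functions of degree ≤ r,
i.e. truth tables of Boolean functions in m variables of degree at most r. -/
def RM (r m : ℕ) : Submodule (ZMod 2) ((Fin m → ZMod 2) → ZMod 2) :=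
  Submodule.span (ZMod 2)
    {f | ∃ S : Finset (Fin m), S.card ≤ r ∧ f = fun x => ∏ i ∈ S, x i}

/-!
Since `x_T * x_U = x_{T ∪ U}` and `∑_x x_T = [T = univ]` over `𝔽₂`, the code `RM(m-2, m)` is the
orthogonal of `RM(1, m)`, spanned by `1` and the coordinates: a word of even weight lies in it iff
its support `S ⊆ 𝔽₂^m` sums to `0`. Such supports of size `N/2` are counted with the characters
`x ↦ (-1)^{c ⬝ x}`: the indicator of `∑ S = 0` is `N⁻¹ ∑_c ∏_{x ∈ S} (-1)^{c ⬝ x}`, and summing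
over all `S` of size `N/2` gives the coefficient of `X^{N/2}` in `∏_x (1 + (-1)^{c ⬝ x} X)`.
That product is `(1 + X)^N` for `c = 0` and `(1 - X^2)^{N/2}` otherwise, because `c ⬝ x = 1` on
exactly half of the points.
-/

open Finset Polynomial

lemma zmod_two_ne_one_iff (z : ZMod 2) : z ≠ 1 ↔ z = 0 := by
  decide +revert

section Monomials

variable {ι : Type*}

def monomialFn (T : Finset ι) (x : ι → ZMod 2) : ZMod 2 := ∏ i ∈ T, x i

lemma monomialFn_eq_ite (T : Finset ι) (x : ι → ZMod 2) :
    monomialFn T x = if ∀ i ∈ T, x i = 1 then 1 else 0 := by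
  split_ifs with h
  · exact prod_eq_one h
  · push Not at h
    obtain ⟨i, hi, hxi⟩ := h
    exact prod_eq_zero hi ((zmod_two_ne_one_iff _).1 hxi)

lemma prod_add_add_one_eq_ite [Fintype ι] (a x : ι → ZMod 2) :
    ∏ i, (x i + a i + 1) = if x = a then 1 else 0 := by
  have (z w : ZMod 2) : z + w + 1 = if z = w then 1 else 0 := by decide +revert
  simp_rw [this, prod_boole, mem_univ, true_imp_iff, funext_iff]

variable [Fintype ι] [DecidableEq ι]

lemma monomialFn_mul_monomialFn (T U : Finset ι) (x : ι → ZMod 2) :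
    monomialFn T x * monomialFn U x = monomialFn (T ∪ U) x := by
  simp only [monomialFn_eq_ite, forall_mem_union, ite_zero_mul_ite_zero, one_mul, ite_and]

lemma sum_monomialFn (T : Finset ι) :
    ∑ x, monomialFn T x = if T = univ then 1 else 0 := by
  have hsum (i : ι) : ∑ z : ZMod 2, (if i ∈ T then z else 1) = if i ∈ T then 1 else 0 := by
    split_ifs <;> rfl
  calc ∑ x, monomialFn T x = ∑ x : ι → ZMod 2, ∏ i, (if i ∈ T then x i else 1) := by
        simp [monomialFn, prod_ite_mem]
    _ = ∏ i, ∑ z : ZMod 2, (if i ∈ T then z else 1) :=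
        (Fintype.prod_sum fun i (z : ZMod 2) => if i ∈ T then z else 1).symm
    _ = if T = univ then 1 else 0 := by
        simp_rw [hsum, prod_boole, eq_univ_iff_forall, mem_univ, true_imp_iff]

lemma sum_monomialFn_mul_monomialFn (T U : Finset ι) :
    ∑ x, monomialFn T x * monomialFn U x = if T ∪ U = univ then 1 else 0 := by
  simp_rw [monomialFn_mul_monomialFn, sum_monomialFn]

lemma span_range_monomialFn :
    Submodule.span (ZMod 2) (Set.range (monomialFn (ι := ι))) = ⊤ := by
  refine Submodule.eq_top_iff'.2 fun f => ?_
  have hpoint (a : ι → ZMod 2) :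
      (fun x => if a = x then 1 else 0) = ∑ t, (∏ i ∈ tᶜ, (a i + 1)) • monomialFn t := by
    ext x
    simp_rw [eq_comm (a := a), ← prod_add_add_one_eq_ite, add_assoc, prod_add, Finset.sum_apply,
      Pi.smul_apply, smul_eq_mul, monomialFn, mul_comm, powerset_univ, compl_eq_univ_sdiff]
  rw [pi_eq_sum_univ f]
  refine Submodule.sum_mem _ fun a _ => Submodule.smul_mem _ _ ?_
  rw [hpoint]
  exact Submodule.sum_mem _ fun t _ => Submodule.smul_mem _ _ (Submodule.subset_span ⟨t, rfl⟩)

end Monomials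

/-- With `U = Tᶜ` the sum in `hc` runs over the supersets of `T`; the proper ones have smaller
complements, so their terms vanish by induction. -/
lemma eq_zero_of_sum_filter_union_eq_univ {ι M : Type*} [Fintype ι] [DecidableEq ι]
    [AddCommMonoid M] {r : ℕ} (c : Finset ι → M)
    (hc : ∀ U : Finset ι, #U ≤ r → ∑ T with T ∪ U = univ, c T = 0)
    (T : Finset ι) (hT : #Tᶜ ≤ r) : c T = 0 := by
  have hsum := hc Tᶜ hT
  rwa [sum_eq_single_of_mem T (by simp) fun T' hT' hne => ?_] at hsum
  have hlt : T ⊂ T' := by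
    refine Finset.ssubset_iff_subset_ne.2 ⟨fun i hi => ?_, Ne.symm hne⟩
    have hi' : i ∈ T' ∪ Tᶜ := (mem_filter.1 hT').2 ▸ mem_univ i
    simpa [hi] using hi'
  exact eq_zero_of_sum_filter_union_eq_univ c hc T'
    ((card_lt_card (compl_ssubset_compl.2 hlt)).le.trans hT)
termination_by #Tᶜ
decreasing_by exact card_lt_card (compl_ssubset_compl.2 hlt)

lemma mem_RM_iff_orthogonal {m r : ℕ} (hr : r < m) (f : (Fin m → ZMod 2) → ZMod 2) :
    f ∈ RM (m - r - 1) m ↔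
      ∀ U : Finset (Fin m), #U ≤ r → ∑ x, f x * monomialFn U x = 0 := by
  constructor
  · intro hf U hU
    induction hf using Submodule.span_induction with
    | mem g hg =>
      obtain ⟨T, hT, rfl⟩ := hg
      refine (sum_monomialFn_mul_monomialFn T U).trans (if_neg fun h => ?_)
      have := card_union_le T U
      rw [h, card_univ, Fintype.card_fin] at this
      omega
    | zero => simp
    | add f g _ _ hf hg => simp [add_mul, sum_add_distrib, hf, hg]
    | smul a f _ hf => simp [mul_assoc, ← mul_sum, hf]
  · intro hf
    obtain ⟨c, rfl⟩ := (Submodule.mem_span_range_iff_exists_fun (ZMod 2)).1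
      (span_range_monomialFn (ι := Fin m) ▸ Submodule.mem_top (x := f))
    have hc (U : Finset (Fin m)) (hU : #U ≤ r) : ∑ T with T ∪ U = univ, c T = 0 := by
      rw [← hf U hU, sum_filter]
      simp_rw [Finset.sum_apply, Pi.smul_apply, smul_eq_mul, sum_mul, mul_assoc]
      rw [sum_comm]
      simp_rw [← mul_sum, sum_monomialFn_mul_monomialFn, mul_ite, mul_one, mul_zero]
    refine Submodule.sum_mem _ fun T _ => ?_
    by_cases hT : #T ≤ m - r - 1
    · exact Submodule.smul_mem _ _ (Submodule.subset_span ⟨T, hT, rfl⟩)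
    · rw [eq_zero_of_sum_filter_union_eq_univ c hc T (by rw [card_compl, Fintype.card_fin]; omega),
        zero_smul]
      exact zero_mem _

lemma coeff_prod_one_add_C_mul_X {α R : Type*} [CommSemiring R] (s : Finset α) (g : α → R)
    (k : ℕ) :
    (∏ a ∈ s, (1 + C (g a) * X)).coeff k = ∑ t ∈ s.powersetCard k, ∏ a ∈ t, g a := by
  classical
  simp_rw [prod_one_add, prod_mul_distrib, ← map_prod, prod_const, finsetSum_coeff,
    coeff_C_mul_X_pow, powersetCard_eq_filter, sum_filter, eq_comm (a := k)]

lemma coeff_one_sub_X_pow {R : Type*} [CommRing R] (n j : ℕ) :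
    ((1 - X : R[X]) ^ n).coeff j = (-1) ^ j * n.choose j := by
  have : (1 - X : R[X]) ^ n = ∏ _i ∈ range n, (1 + C (-1) * X) := by
    simp [sub_eq_add_neg]
  rw [this, coeff_prod_one_add_C_mul_X, sum_congr rfl fun t ht => by
    rw [prod_const, (mem_powersetCard.1 ht).2], sum_const, card_powersetCard, card_range,
    nsmul_eq_mul, mul_comm]

lemma coeff_one_sub_X_sq_pow {R : Type*} [CommRing R] (n j : ℕ) :
    ((1 - X ^ 2 : R[X]) ^ n).coeff (j * 2) = (-1) ^ j * n.choose j := by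
  have : (1 - X ^ 2 : R[X]) ^ n = expand R 2 ((1 - X) ^ n) := by simp
  rw [this, coeff_expand_mul two_pos, coeff_one_sub_X_pow]

noncomputable def signChar : AddChar (ZMod 2) ℚ :=
  AddChar.zmodChar 2 (by norm_num : (-1 : ℚ) ^ 2 = 1)

lemma signChar_eq_ite (z : ZMod 2) : signChar z = if z = 1 then -1 else 1 := by
  rw [signChar, AddChar.zmodChar_apply]
  fin_cases z <;> rfl

lemma signChar_sum {α : Type*} (s : Finset α) (g : α → ZMod 2) :
    signChar (∑ a ∈ s, g a) = ∏ a ∈ s, signChar (g a) := by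
  classical
  induction s using Finset.induction_on with
  | empty => simp
  | insert a s ha ih => rw [sum_insert ha, prod_insert ha, AddChar.map_add_eq_mul, ih]

section Characters

variable {ι : Type*} [Fintype ι] [DecidableEq ι]

lemma sum_signChar_dotProduct (v : ι → ZMod 2) :
    ∑ c, signChar (c ⬝ᵥ v) = if v = 0 then 2 ^ Fintype.card ι else 0 := by
  let ψ : AddChar (ι → ZMod 2) ℚ :=
    signChar.compAddMonoidHom (AddMonoidHom.mk' (· ⬝ᵥ v) fun a b => add_dotProduct a b v)
  have hψ : ψ = 0 ↔ v = 0 := by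
    refine ⟨fun h => funext fun i => ?_, fun h => by ext c; simp [ψ, h]⟩
    have hi := AddChar.eq_zero_iff.1 h (Pi.single i 1)
    exact (zmod_two_ne_one_iff _).1 fun h1 => by norm_num [ψ, signChar_eq_ite, h1] at hi
  simpa [ψ, hψ, Fintype.card_fun] using AddChar.sum_eq_ite ψ

lemma card_filter_dotProduct_ne_one {c : ι → ZMod 2} (hc : c ≠ 0) :
    #{x | c ⬝ᵥ x ≠ 1} = #{x | c ⬝ᵥ x = 1} := by
  have hsum := sum_signChar_dotProduct c
  simp_rw [if_neg hc, dotProduct_comm _ c, signChar_eq_ite, sum_ite, sum_const,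
    nsmul_eq_mul] at hsum
  exact_mod_cast (by linarith : (#{x | c ⬝ᵥ x ≠ 1} : ℚ) = #{x | c ⬝ᵥ x = 1})

lemma card_filter_dotProduct_eq_one {c : ι → ZMod 2} (hc : c ≠ 0) :
    #{x | c ⬝ᵥ x = 1} = 2 ^ (Fintype.card ι - 1) := by
  have hι : Fintype.card ι ≠ 0 :=
    fun h => hc (funext fun i => ((Fintype.card_eq_zero_iff.1 h).false i).elim)
  have hcard := card_filter_add_card_filter_not (s := univ) fun x => c ⬝ᵥ x = 1
  rw [card_filter_dotProduct_ne_one hc, card_univ, Fintype.card_fun, ZMod.card,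
    ← Nat.sub_one_add_one hι, pow_succ] at hcard
  omega

lemma prod_one_add_C_signChar_mul_X {c : ι → ZMod 2} (hc : c ≠ 0) :
    ∏ x, (1 + C (signChar (c ⬝ᵥ x)) * X) = (1 - X ^ 2 : ℚ[X]) ^ #{x | c ⬝ᵥ x = 1} := by
  simp_rw [signChar_eq_ite, apply_ite C, ite_mul, add_ite, prod_ite, prod_const,
    card_filter_dotProduct_ne_one hc, ← mul_pow, map_neg, map_one]
  ring

theorem card_filter_sum_eq_zero_mul_two_pow (k : ℕ) :
    (#{S ∈ powersetCard k (univ : Finset (ι → ZMod 2)) | ∑ x ∈ S, x = 0} : ℚ) *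
        2 ^ Fintype.card ι =
      (2 ^ Fintype.card ι).choose k +
        (2 ^ Fintype.card ι - 1) * ((1 - X ^ 2 : ℚ[X]) ^ 2 ^ (Fintype.card ι - 1)).coeff k := by
  calc _ = ∑ S ∈ powersetCard k (univ : Finset (ι → ZMod 2)),
        if ∑ x ∈ S, x = 0 then (2 : ℚ) ^ Fintype.card ι else 0 := by
        rw [natCast_card_filter, sum_mul]
        simp_rw [ite_mul, one_mul, zero_mul]
    _ = ∑ S ∈ powersetCard k (univ : Finset (ι → ZMod 2)),
          ∑ c : ι → ZMod 2, ∏ x ∈ S, signChar (c ⬝ᵥ x) := by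
        simp_rw [← sum_signChar_dotProduct, dotProduct_sum, signChar_sum]
    _ = ∑ c : ι → ZMod 2, (∏ x, (1 + C (signChar (c ⬝ᵥ x)) * X)).coeff k := by
        rw [sum_comm]
        simp_rw [coeff_prod_one_add_C_mul_X]
    _ = _ := by
        rw [← add_sum_erase _ _ (mem_univ 0)]
        congr 1
        · simp [prod_const, coeff_one_add_X_pow]
        · rw [sum_congr rfl fun c hc => by
            rw [prod_one_add_C_signChar_mul_X (ne_of_mem_erase hc),
              card_filter_dotProduct_eq_one (ne_of_mem_erase hc)],
            sum_const, card_erase_of_mem (mem_univ _), card_univ, Fintype.card_fun, ZMod.card,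
            nsmul_eq_mul]
          push_cast [Nat.one_le_two_pow]
          ring

end Characters

section Indicator

variable {α : Type*} [DecidableEq α]

def zmodIndicator (S : Finset α) (x : α) : ZMod 2 := if x ∈ S then 1 else 0

lemma filter_zmodIndicator_eq_one [Fintype α] (S : Finset α) :
    ({x | zmodIndicator S x = 1} : Finset α) = S := by
  ext x
  by_cases x ∈ S <;> simp [zmodIndicator, *]

lemma zmodIndicator_injective [Fintype α] : Function.Injective (zmodIndicator (α := α)) :=
  fun S T h => by rw [← filter_zmodIndicator_eq_one S, h, filter_zmodIndicator_eq_one]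

lemma zmodIndicator_filter_eq_one [Fintype α] (f : α → ZMod 2) :
    zmodIndicator {x | f x = 1} = f := by
  ext x
  by_cases h : f x = 1 <;> simp [zmodIndicator, h, (zmod_two_ne_one_iff _).1]

lemma sum_zmodIndicator_mul [Fintype α] (S : Finset α) (g : α → ZMod 2) :
    ∑ x, zmodIndicator S x * g x = ∑ x ∈ S, g x := by
  simp [zmodIndicator, ite_mul, sum_ite_mem]

end Indicator

lemma forall_card_le_one_iff {ι : Type*} {p : Finset ι → Prop} :
    (∀ U : Finset ι, #U ≤ 1 → p U) ↔ p ∅ ∧ ∀ i, p {i} := by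
  refine ⟨fun h => ⟨h ∅ (by simp), fun i => h {i} (by simp)⟩, fun ⟨h0, h1⟩ U hU => ?_⟩
  obtain hU | hU := Nat.le_one_iff_eq_zero_or_eq_one.1 hU
  · rwa [card_eq_zero.1 hU]
  · obtain ⟨i, rfl⟩ := card_eq_one.1 hU
    exact h1 i

lemma zmodIndicator_mem_RM_sub_two_iff {m : ℕ} (hm : 2 ≤ m) {S : Finset (Fin m → ZMod 2)}
    (hS : Even #S) : zmodIndicator S ∈ RM (m - 2) m ↔ ∑ x ∈ S, x = 0 := by
  rw [show m - 2 = m - 1 - 1 by omega, mem_RM_iff_orthogonal (by omega), forall_card_le_one_iff]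
  simp only [monomialFn, prod_empty, prod_singleton, sum_zmodIndicator_mul]
  simp [ZMod.natCast_eq_zero_iff_even.2 hS, funext_iff, Finset.sum_apply]

lemma setOf_mem_RM_and_wtF_eq {m k : ℕ} (hm : 2 ≤ m) (hk : Even k) :
    {f | f ∈ RM (m - 2) m ∧ wtF f = k} =
      zmodIndicator '' ↑({S ∈ powersetCard k univ | ∑ x ∈ S, x = 0} :
        Finset (Finset (Fin m → ZMod 2))) := by
  ext f
  simp only [Set.mem_ofPred_eq, Set.mem_image, mem_coe, mem_filter, mem_powersetCard_univ]
  constructor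
  · rintro ⟨hf, hwt⟩
    refine ⟨({x | f x = 1} : Finset _), ⟨hwt, ?_⟩, zmodIndicator_filter_eq_one f⟩
    rwa [← zmodIndicator_mem_RM_sub_two_iff hm (show Even (wtF f) from hwt ▸ hk),
      zmodIndicator_filter_eq_one]
  · rintro ⟨S, ⟨rfl, hS⟩, rfl⟩
    exact ⟨(zmodIndicator_mem_RM_sub_two_iff hm hk).2 hS,
      congrArg card (filter_zmodIndicator_eq_one S)⟩

theorem extended_hamming_balanced_count (m : ℕ) (hm : 3 ≤ m) :
    (({f | f ∈ RM (m - 2) m ∧ wtF f = 2 ^ (m - 1)}.ncard : ℚ)) =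
      (1 / (2 ^ m : ℚ)) *
        ((Nat.choose (2 ^ m) (2 ^ m / 2) : ℚ) +
          ((2 ^ m : ℚ) - 1) * (Nat.choose (2 ^ m / 2) (2 ^ m / 4) : ℚ)) := by
  have hhalf : 2 ^ m / 2 = 2 ^ (m - 1) := Nat.pow_div (n := 1) (by omega) two_pos
  have hquarter : 2 ^ m / 4 = 2 ^ (m - 2) := Nat.pow_div (n := 2) (by omega) two_pos
  have hdouble : 2 ^ (m - 1) = 2 ^ (m - 2) * 2 := by rw [← pow_succ]; congr 1; omega
  have hcoeff := coeff_one_sub_X_sq_pow (R := ℚ) (2 ^ (m - 1)) (2 ^ (m - 2))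
  rw [← hdouble, ((Nat.even_pow' (by omega)).2 even_two).neg_one_pow, one_mul] at hcoeff
  have hcount := card_filter_sum_eq_zero_mul_two_pow (ι := Fin m) (2 ^ (m - 1))
  rw [Fintype.card_fin, hcoeff] at hcount
  rw [hhalf, hquarter, setOf_mem_RM_and_wtF_eq (by omega) ((Nat.even_pow' (by omega)).2 even_two),
    Set.ncard_image_of_injective _ zmodIndicator_injective, Set.ncard_coe_finset]
  field_simp
  linarith
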